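/- Let φ_8^{±}(x,y) = x^8 - (84 ± 56√2) x^6 y^2 + (1190 ± 840√2) x^4 y^4 - (2772 ± 1960√2) x^2 y^6 + (577 ± 408√2) y^8 and let P_8^{±}(T) be the zeta polynomial of φ_8^{±} with respect to q = 4 ± 2√2. Then: (i) P_8^{+} has a complex root α with |α| ≠ 1/√(4 + 2√2) (the Riemann hypothesis fails for φ_8^{+}); (ii) every complex root α of P_8^{-} satisfies |α| = 1/√(4 - 2√2) (the Riemann hypothesis holds for φ_8^{-}). -/

import Mathlib

noncomputable def phi8p : ℂ → ℂ → ℂ := fun x y =>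
  x ^ 8 - ((84 + 56 * Real.sqrt 2 : ℝ) : ℂ) * x ^ 6 * y ^ 2
    + ((1190 + 840 * Real.sqrt 2 : ℝ) : ℂ) * x ^ 4 * y ^ 4
    - ((2772 + 1960 * Real.sqrt 2 : ℝ) : ℂ) * x ^ 2 * y ^ 6
    + ((577 + 408 * Real.sqrt 2 : ℝ) : ℂ) * y ^ 8

noncomputable def phi8m : ℂ → ℂ → ℂ := fun x y =>
  x ^ 8 - ((84 - 56 * Real.sqrt 2 : ℝ) : ℂ) * x ^ 6 * y ^ 2
    + ((1190 - 840 * Real.sqrt 2 : ℝ) : ℂ) * x ^ 4 * y ^ 4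
    - ((2772 - 1960 * Real.sqrt 2 : ℝ) : ℂ) * x ^ 2 * y ^ 6
    + ((577 - 408 * Real.sqrt 2 : ℝ) : ℂ) * y ^ 8

noncomputable def q8p : ℝ := 4 + 2 * Real.sqrt 2

noncomputable def q8m : ℝ := 4 - 2 * Real.sqrt 2

/-! The defining relation is triangular in the coefficients of `P`: with `y = 1`, `x = 1 + t`, the
coefficient of `t ^ k` is `C(n, k)` times `∑_{m ≤ r - k} P.coeff m (1 + q + ⋯ + q ^ (r - k - m))`, in
which `P.coeff (r - k)` appears with factor `1`. Hence the zeta polynomial is unique, and for `s = ±√2`,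
`q = 4 + 2s` it is
`P = -1 + (2 + 2s) T + (8 + 6s) T² - (56 + 40s) T⁴ - (112 + 80s) T⁵ + (160 + 112s) T⁶`
`  = 16 (10 + 7s) (T² - 1/q) (T² + (√10 - s)/4 T + 1/q) (T² - (√10 + s)/4 T + 1/q)`.
For `s = -√2` both quadratic factors have negative discriminant, so every root has modulus `1/√q`.
For `s = √2`, `P(1/2) < 0 < P(1) = 1` gives a real root `≥ 1/2 > 1/√q`. -/

open Polynomial Finset

theorem Complex.norm_eq_sqrt_of_sq_eq {α : ℂ} {c : ℝ} (hc : 0 ≤ c) (h : α ^ 2 = c) :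
    ‖α‖ = √c := by
  rw [← Real.sqrt_sq (norm_nonneg α), ← norm_pow, h, Complex.norm_of_nonneg hc]

theorem Complex.norm_eq_sqrt_of_quadratic_eq_zero {u c : ℝ} (hd : u ^ 2 < 4 * c) {α : ℂ}
    (h : α ^ 2 + u * α + c = 0) : ‖α‖ = √c := by
  have hconj : (starRingEnd ℂ) α ^ 2 + u * (starRingEnd ℂ) α + c = 0 := by
    simpa using congrArg (starRingEnd ℂ) h
  have hroots : ((starRingEnd ℂ) α - α) * ((starRingEnd ℂ) α + α + u) = 0 := by
    linear_combination hconj - h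
  rcases mul_eq_zero.1 hroots with hreal | hsum
  · obtain ⟨a, rfl⟩ := Complex.conj_eq_iff_real.1 (sub_eq_zero.1 hreal)
    have : a ^ 2 + u * a + c = 0 := by exact_mod_cast h
    nlinarith [sq_nonneg (2 * a + u)]
  · have hnorm : (Complex.normSq α : ℂ) = c := by
      rw [← Complex.mul_conj]
      linear_combination α * hsum - h
    rw [Complex.norm_def, show Complex.normSq α = c by exact_mod_cast hnorm]

section ZetaSum

variable {R : Type*} [CommRing R]

/-- The coefficient of `T ^ r` in `P(T) (y(1-T) + xT) ^ n / ((1-T)(1-qT))`, using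
`(y(1-T) + xT) ^ n = ∑ C(n, k) y ^ (n-k) (x-y) ^ k T ^ k` and
`1 / ((1-T)(1-qT)) = ∑ (1 + q + ⋯ + q ^ l) T ^ l`. -/
def zetaSum (q : R) (n r : ℕ) (P : R[X]) (x y : R) : R :=
  ∑ m ∈ range (r + 1), ∑ k ∈ range (r + 1 - m),
    P.coeff m * (n.choose k : R) * y ^ (n - k) * (x - y) ^ k *
      ∑ j ∈ range (r + 1 - m - k), q ^ j

theorem zetaSum_eq_sum_choose (q : R) (n r : ℕ) (P : R[X]) (x y : R) :
    zetaSum q n r P x y = ∑ k ∈ range (r + 1), (n.choose k : R) * y ^ (n - k) * (x - y) ^ k *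
      ∑ m ∈ range (r + 1), P.coeff m * ∑ j ∈ range (r + 1 - m - k), q ^ j := by
  have extend (m : ℕ) : ∑ k ∈ range (r + 1 - m),
      P.coeff m * (n.choose k : R) * y ^ (n - k) * (x - y) ^ k *
        ∑ j ∈ range (r + 1 - m - k), q ^ j =
      ∑ k ∈ range (r + 1), P.coeff m * (n.choose k : R) * y ^ (n - k) * (x - y) ^ k *
        ∑ j ∈ range (r + 1 - m - k), q ^ j := by
    refine sum_subset (range_subset_range.2 (Nat.sub_le _ _)) fun k _ hk => ?_
    rw [mem_range, not_lt] at hk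
    rw [Nat.sub_eq_zero_of_le hk, sum_range_zero, mul_zero]
  rw [zetaSum, sum_congr rfl fun m _ => extend m, sum_comm]
  refine sum_congr rfl fun k _ => ?_
  rw [mul_sum]
  exact sum_congr rfl fun m _ => by ring

theorem zetaSum_sub (q : R) (n r : ℕ) (P Q : R[X]) (x y : R) :
    zetaSum q n r (P - Q) x y = zetaSum q n r P x y - zetaSum q n r Q x y := by
  simp only [zetaSum, coeff_sub, ← sum_sub_distrib, sub_mul]

theorem eq_zero_of_forall_sum_mul_pow_eq_zero [IsDomain R] [Infinite R] {N : ℕ} {b : ℕ → R}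
    (h : ∀ t, ∑ k ∈ range N, b k * t ^ k = 0) {k : ℕ} (hk : k < N) : b k = 0 := by
  have hp : ∑ i ∈ range N, C (b i) * X ^ i = 0 :=
    Polynomial.funext fun t => by simp [eval_finsetSum, h]
  simpa [finsetSum_coeff, coeff_C_mul_X_pow, hk] using congrArg (coeff · k) hp

theorem eq_zero_of_forall_sum_geom_sum_eq_zero {q : R} {r : ℕ} {a : ℕ → R}
    (h : ∀ k ≤ r, ∑ m ∈ range (r + 1), a m * ∑ j ∈ range (r + 1 - m - k), q ^ j = 0) :
    ∀ i ≤ r, a i = 0 := by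
  intro i
  induction i using Nat.strong_induction_on with
  | _ i ih =>
    intro hi
    have hsum := h (r - i) (Nat.sub_le r i)
    rwa [sum_eq_single i (fun m _ hmi => ?_) (fun hi' => absurd (mem_range.2 (by omega)) hi'),
      show r + 1 - i - (r - i) = 1 by omega, sum_range_one, pow_zero, mul_one] at hsum
    rcases lt_or_gt_of_ne hmi with hlt | hgt
    · rw [ih m hlt (by omega), zero_mul]
    · rw [show r + 1 - m - (r - i) = 0 by omega, sum_range_zero, mul_zero]

variable [IsDomain R] [CharZero R]

theorem coeff_eq_zero_of_zetaSum_eq_zero {q : R} {n r : ℕ} (hrn : r ≤ n) {P : R[X]}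
    (h : ∀ x y, zetaSum q n r P x y = 0) {i : ℕ} (hi : i ≤ r) : P.coeff i = 0 := by
  refine eq_zero_of_forall_sum_geom_sum_eq_zero (q := q) (a := P.coeff) (fun k hk => ?_) i hi
  have hchoose : (n.choose k : R) ≠ 0 := Nat.cast_ne_zero.2 (Nat.choose_pos (by omega)).ne'
  have hpoly (t : R) : ∑ k ∈ range (r + 1), ((n.choose k : R) *
      ∑ m ∈ range (r + 1), P.coeff m * ∑ j ∈ range (r + 1 - m - k), q ^ j) * t ^ k = 0 := by
    simpa [zetaSum_eq_sum_choose, mul_right_comm] using h (t + 1) 1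
  exact (mul_eq_zero.1 (eq_zero_of_forall_sum_mul_pow_eq_zero hpoly (Nat.lt_succ_of_le hk))).resolve_left
    hchoose

theorem eq_of_zetaSum_eq {q : R} {n r : ℕ} (hrn : r ≤ n) {P Q : R[X]}
    (hP : P.degree ≤ r) (hQ : Q.degree ≤ r)
    (h : ∀ x y, zetaSum q n r P x y = zetaSum q n r Q x y) : P = Q := by
  ext i
  by_cases hi : i ≤ r
  · rw [← sub_eq_zero, ← coeff_sub]
    exact coeff_eq_zero_of_zetaSum_eq_zero hrn (fun x y => by rw [zetaSum_sub, h, sub_self]) hi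
  · have hlt (S : R[X]) (hS : S.degree ≤ r) : S.degree < i :=
      hS.trans_lt (by exact_mod_cast not_le.1 hi)
    rw [coeff_eq_zero_of_degree_lt (hlt P hP), coeff_eq_zero_of_degree_lt (hlt Q hQ)]

end ZetaSum

section Degree8

variable {R : Type*} [CommRing R]

/- For `s = ±√2`, `phi8 s` is `φ₈^±` and `zeta8 s` is its zeta polynomial for `q = 4 + 2s`. -/
def phi8 (s x y : R) : R :=
  x ^ 8 - (84 + 56 * s) * x ^ 6 * y ^ 2 + (1190 + 840 * s) * x ^ 4 * y ^ 4
    - (2772 + 1960 * s) * x ^ 2 * y ^ 6 + (577 + 408 * s) * y ^ 8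

noncomputable def zeta8 (s : R) : R[X] :=
  C (-1) + C (2 + 2 * s) * X + C (8 + 6 * s) * X ^ 2 - C (56 + 40 * s) * X ^ 4
    - C (112 + 80 * s) * X ^ 5 + C (160 + 112 * s) * X ^ 6

theorem degree_zeta8_le (s : R) : (zeta8 s).degree ≤ 6 := by
  unfold zeta8; compute_degree

theorem zeta8_map {S : Type*} [CommRing S] (f : R →+* S) (s : R) :
    (zeta8 s).map f = zeta8 (f s) := by
  simp [zeta8, map_ofNat]

theorem eval_zeta8_one (s : R) : (zeta8 s).eval 1 = 1 := by
  simp [zeta8]; ring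

end Degree8

section Degree8Field

variable {K : Type*} [Field K] [CharZero K] {s : K}

theorem zetaSum_zeta8 (hs : s ^ 2 = 2) (x y : K) :
    zetaSum (4 + 2 * s) 8 6 (zeta8 s) x y = (phi8 s x y - x ^ 8) / (4 + 2 * s - 1) := by
  have hq : (4 + 2 * s - 1 : K) ≠ 0 := by
    intro h
    have : (9 : K) = 8 := by linear_combination (3 - 2 * s) * h + 4 * hs
    norm_num at this
  rw [eq_div_iff hq]
  simp only [zetaSum, sum_range_succ, sum_range_zero, zeta8, coeff_add, coeff_sub, coeff_C_mul,
    coeff_X_pow, coeff_X, coeff_C]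
  norm_num [phi8, Nat.choose]
  linear_combination (280 * x ^ 4 * y ^ 4 + (448 * s + 672) * x ^ 3 * y ^ 5
    + (448 * s ^ 2 + 1344 * s + 336) * x ^ 2 * y ^ 6
    + (256 * s ^ 3 + 1152 * s ^ 2 + 1344 * s + 288) * x * y ^ 7
    + (64 * s ^ 4 + 384 * s ^ 3 + 768 * s ^ 2 + 576 * s + 248) * y ^ 8) * hs

theorem eq_zeta8_of_zetaSum (hs : s ^ 2 = 2) {P : K[X]} (hP : P.degree ≤ 6)
    (h : ∀ x y, zetaSum (4 + 2 * s) 8 6 P x y = (phi8 s x y - x ^ 8) / (4 + 2 * s - 1)) :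
    P = zeta8 s :=
  eq_of_zetaSum_eq (by norm_num) hP (degree_zeta8_le s) fun x y =>
    (h x y).trans (zetaSum_zeta8 hs x y).symm

theorem eval_zeta8_eq_mul {w : K} (hs : s ^ 2 = 2) (hw : w ^ 2 = 10) (T : K) :
    (zeta8 s).eval T = 16 * (10 + 7 * s) * (T ^ 2 - (2 - s) / 4) *
      (T ^ 2 + (w - s) / 4 * T + (2 - s) / 4) * (T ^ 2 - (w + s) / 4 * T + (2 - s) / 4) := by
  simp only [zeta8, eval_add, eval_sub, eval_mul, eval_C, eval_X, eval_pow]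
  linear_combination (-7 / 4 * s ^ 2 * T ^ 2 - 7 / 2 * s ^ 2 * T - 7 / 4 * s ^ 2 - 7 * s * T ^ 4
    + 8 * s * T ^ 2 + 9 * s * T + 8 * s + 7 / 4 * w ^ 2 * T ^ 2 + 56 * T ^ 5 + 18 * T ^ 4
    - 33 / 2 * T ^ 2 - T - 19 / 2) * hs
    + ((10 + 7 * s) * T ^ 4 - (3 / 2 + s) * T ^ 2) * hw

end Degree8Field

theorem exists_isRoot_zeta8_sqrt_two : ∃ a ∈ Set.Icc (1 / 2 : ℝ) 1, (zeta8 √2).IsRoot a := by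
  have hlow : (zeta8 √2).eval (1 / 2 : ℝ) ≤ 0 := by
    simp only [zeta8, eval_add, eval_sub, eval_mul, eval_C, eval_X, eval_pow]
    nlinarith [Real.sqrt_nonneg 2]
  have hhigh : 0 ≤ (zeta8 √2).eval (1 : ℝ) := by rw [eval_zeta8_one]; exact zero_le_one
  exact intermediate_value_Icc (by norm_num) (zeta8 √2).continuous.continuousOn ⟨hlow, hhigh⟩

theorem norm_eq_of_isRoot_zeta8_neg_sqrt_two {α : ℂ} (h : (zeta8 (-(√2 : ℂ))).IsRoot α) :
    ‖α‖ = √((2 + √2) / 4) := by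
  have h2 : √2 ^ 2 = 2 := Real.sq_sqrt zero_le_two
  have h10 : √10 ^ 2 = 10 := Real.sq_sqrt (by norm_num)
  have hs : (-(√2 : ℂ)) ^ 2 = 2 := by rw [neg_sq]; exact_mod_cast h2
  have hw : ((√10 : ℝ) : ℂ) ^ 2 = 10 := by exact_mod_cast h10
  have hc : (0 : ℝ) ≤ (2 + √2) / 4 := by positivity
  rw [IsRoot, eval_zeta8_eq_mul hs hw] at h
  rcases mul_eq_zero.1 h with h | h
  rcases mul_eq_zero.1 h with h | h
  rcases mul_eq_zero.1 h with h | h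
  · have : (2 : ℂ) = 0 := by linear_combination (10 - 7 * -(√2 : ℂ)) / 16 * h + 49 * hs
    norm_num at this
  · exact Complex.norm_eq_sqrt_of_sq_eq hc (by push_cast; linear_combination h)
  · refine Complex.norm_eq_sqrt_of_quadratic_eq_zero (u := (√10 + √2) / 4) ?_
      (by push_cast; linear_combination h)
    nlinarith [sq_nonneg (√10 - √2), Real.sqrt_nonneg 2]
  · refine Complex.norm_eq_sqrt_of_quadratic_eq_zero (u := (√2 - √10) / 4) ?_
      (by push_cast; linear_combination h)
    nlinarith [sq_nonneg (√10 + √2), Real.sqrt_nonneg 2, Real.sqrt_nonneg 10]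

theorem ofReal_q8p : (q8p : ℂ) = 4 + 2 * √2 := by
  push_cast [q8p]; ring

theorem ofReal_q8m : (q8m : ℂ) = 4 + 2 * -√2 := by
  push_cast [q8m]; ring

theorem phi8p_eq_phi8 (x y : ℂ) : phi8p x y = phi8 (√2 : ℂ) x y := by
  simp only [phi8p, phi8]; push_cast; ring

theorem phi8m_eq_phi8 (x y : ℂ) : phi8m x y = phi8 (-(√2 : ℂ)) x y := by
  simp only [phi8m, phi8]; push_cast; ring

/-- Theorem 5.6: the zeta polynomial `P₈⁺` of the extremal formal weight
enumerator `φ₈⁺` (for `q = 4 + 2√2`, `n = 8`, `d = 2`) has a root off the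
circle `|T| = 1/√(4+2√2)` (the Riemann hypothesis fails), while every root of
the zeta polynomial `P₈⁻` of `φ₈⁻` (for `q = 4 - 2√2`) lies on the circle
`|T| = 1/√(4-2√2)` (the Riemann hypothesis holds).  The zeta polynomials are
characterized by: `deg P ≤ n - d = 6` and the coefficient of `T^6` in
`P(T)(y(1-T)+xT)^8/((1-T)(1-qT))` equals `(φ₈^{±}(x,y) - x^8)/(q-1)`. -/
theorem phi8_extremal_riemann_hypothesis (Pp Pm : Polynomial ℂ)
    (hPpdeg : Pp.degree ≤ 6)
    (hPp : ∀ x y : ℂ,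
      (∑ m ∈ Finset.range 7, ∑ k ∈ Finset.range (7 - m),
          Pp.coeff m * (Nat.choose 8 k : ℂ) * y ^ (8 - k) * (x - y) ^ k *
            ∑ j ∈ Finset.range (7 - m - k), (q8p : ℂ) ^ j)
        = (phi8p x y - x ^ 8) / ((q8p : ℂ) - 1))
    (hPmdeg : Pm.degree ≤ 6)
    (hPm : ∀ x y : ℂ,
      (∑ m ∈ Finset.range 7, ∑ k ∈ Finset.range (7 - m),
          Pm.coeff m * (Nat.choose 8 k : ℂ) * y ^ (8 - k) * (x - y) ^ k *
            ∑ j ∈ Finset.range (7 - m - k), (q8m : ℂ) ^ j)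
        = (phi8m x y - x ^ 8) / ((q8m : ℂ) - 1)) :
    (∃ α : ℂ, Pp.IsRoot α ∧ ‖α‖ ≠ 1 / Real.sqrt q8p) ∧
    (∀ α : ℂ, Pm.IsRoot α → ‖α‖ = 1 / Real.sqrt q8m) := by
  have h2 : √2 ^ 2 = 2 := Real.sq_sqrt zero_le_two
  have hs : (√2 : ℂ) ^ 2 = 2 := by exact_mod_cast h2
  have hp : Pp = zeta8 (√2 : ℂ) := eq_zeta8_of_zetaSum hs hPpdeg fun x y => by
    rw [← ofReal_q8p, ← phi8p_eq_phi8]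
    exact hPp x y
  have hm : Pm = zeta8 (-(√2 : ℂ)) :=
    eq_zeta8_of_zetaSum (by rw [neg_sq, hs]) hPmdeg fun x y => by
      rw [← ofReal_q8m, ← phi8m_eq_phi8]
      exact hPm x y
  refine ⟨?_, fun α hα => ?_⟩
  · obtain ⟨a, ⟨ha, -⟩, hroot⟩ := exists_isRoot_zeta8_sqrt_two
    refine ⟨a, by simpa [hp, zeta8_map] using hroot.map (f := Complex.ofRealHom), ?_⟩
    have hq : 1 / √q8p < 1 / 2 := by
      refine one_div_lt_one_div_of_lt two_pos ((Real.lt_sqrt zero_le_two).2 ?_)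
      rw [q8p]; nlinarith [Real.sqrt_pos.2 (zero_lt_two' ℝ)]
    rw [Complex.norm_of_nonneg (by linarith)]
    exact (hq.trans_le ha).ne'
  · have hc : (2 + √2) / 4 = q8m⁻¹ :=
      eq_inv_of_mul_eq_one_left (by rw [q8m]; linear_combination -h2 / 2)
    rw [norm_eq_of_isRoot_zeta8_neg_sqrt_two (hm ▸ hα), hc, Real.sqrt_inv, one_div]
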